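/- arXiv:math/0603747 — 5 statements merged into one kernel-verified Lean document; each statement's English description precedes it below -/
import Mathlib

section
/- For p ≥ 5 and a homocyclic group H of type (p^n, p^n) with n ≥ 2 (i.e., H ≅ (ℤ/p^n)^2), the reduction map Aut(H) ≅ GL_2(ℤ/p^n) → GL_2(ℤ/p) does not split: there is no group homomorphism s : GL_2(ℤ/p) → GL_2(ℤ/p^n) with reduction ∘ s = id. -/
open Finset
lemma aux_pow_expand {R : Type*} [Ring R] (u e : R) (he : ∀ x : R, e * x * e = 0) :
    ∀ k : ℕ, (u + e) ^ k = u ^ k + ∑ i ∈ range k, u ^ i * e * u ^ (k - 1 - i) := by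
  intro k
  induction k with
  | zero => simp
  | succ k ih =>
    rw [pow_succ, ih, add_mul, mul_add, mul_add, ← pow_succ]
    have hSe : (∑ i ∈ range k, u ^ i * e * u ^ (k - 1 - i)) * e = 0 := by
      rw [Finset.sum_mul]
      refine Finset.sum_eq_zero fun i hi => ?_
      rw [mul_assoc (u ^ i), mul_assoc (u ^ i)]
      rw [he, mul_zero]
    have hSu : (∑ i ∈ range k, u ^ i * e * u ^ (k - 1 - i)) * u
        = ∑ i ∈ range k, u ^ i * e * u ^ (k - i) := by
      rw [Finset.sum_mul]
      refine Finset.sum_congr rfl fun i hi => ?_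
      have hik := Finset.mem_range.mp hi
      rw [mul_assoc, ← pow_succ]
      have h' : k - 1 - i + 1 = k - i := by omega
      rw [h']
    have hcongr : ∀ i ∈ range (k+1), u ^ i * e * u ^ (k + 1 - 1 - i) = u ^ i * e * u ^ (k - i) := by
      intro i hi
      have h' : k + 1 - 1 - i = k - i := by omega
      rw [h']
    rw [hSe, hSu, add_zero, Finset.sum_congr rfl hcongr, Finset.sum_range_succ,
      Nat.sub_self, pow_zero, mul_one]
    abel

lemma aux_one_add_pow {R : Type*} [Ring R] (t : R) (ht : t * t = 0) :
    ∀ k : ℕ, (1 + t) ^ k = 1 + k • t := by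
  intro k
  induction k with
  | zero => simp
  | succ k ih =>
    simp only [pow_succ, ih, add_mul, mul_add, mul_one, one_mul, smul_mul_assoc, ht,
      smul_zero, add_zero, succ_nsmul]
    abel

lemma aux_six_sq (m : ℕ) :
    6 * ∑ i ∈ range m, i * i = m * (m - 1) * (2 * m - 1) := by
  induction m with
  | zero => simp
  | succ m ih =>
    rw [Finset.sum_range_succ, Nat.mul_add, ih]
    cases m with
    | zero => simp
    | succ k =>
      have h1 : k + 1 - 1 = k := by omega
      have h2 : 2 * (k + 1) - 1 = 2 * k + 1 := by omega
      have h3 : k + 1 + 1 - 1 = k + 1 := by omega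
      have h4 : 2 * (k + 1 + 1) - 1 = 2 * k + 3 := by omega
      rw [h1, h2, h3, h4]
      ring

lemma aux_dvd_sum_id (p : ℕ) (hp : p.Prime) (hp5 : 5 ≤ p) :
    p ∣ ∑ i ∈ range p, i := by
  have h := Finset.sum_range_id_mul_two p
  have hd : p ∣ (∑ i ∈ range p, i) * 2 := h ▸ Dvd.intro _ rfl
  rcases (Nat.Prime.dvd_mul hp).mp hd with h2 | h2
  · exact h2
  · exact absurd (Nat.le_of_dvd (by norm_num) h2) (by omega)

lemma aux_dvd_sum_mul (p : ℕ) (hp : p.Prime) (hp5 : 5 ≤ p) :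
    p ∣ ∑ i ∈ range p, i * (p - 1 - i) := by
  have hsum : (∑ i ∈ range p, i * (p - 1 - i)) + ∑ i ∈ range p, i * i
      = (∑ i ∈ range p, i) * (p - 1) := by
    rw [← Finset.sum_add_distrib, Finset.sum_mul]
    refine Finset.sum_congr rfl fun i hi => ?_
    have hik := Finset.mem_range.mp hi
    have h : (p - 1 - i) + i = p - 1 := by omega
    rw [← Nat.mul_add, h]
  have h2 : (∑ i ∈ range p, i) * 2 = p * (p - 1) := Finset.sum_range_id_mul_two p
  have h6 : 6 * ∑ i ∈ range p, i * i = p * (p - 1) * (2 * p - 1) := aux_six_sq p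
  set X := ∑ i ∈ range p, i * (p - 1 - i) with hX
  set a := p * (p - 1) * (2 * p - 1) with ha
  set b := 3 * (p * (p - 1)) * (p - 1) with hb
  have key : 6 * X + a = b := by
    calc 6 * X + a = 6 * (X + ∑ i ∈ range p, i * i) := by rw [← h6]; ring
      _ = 6 * ((∑ i ∈ range p, i) * (p - 1)) := by rw [hsum]
      _ = 3 * ((∑ i ∈ range p, i) * 2) * (p - 1) := by ring
      _ = b := by rw [h2, hb]
  have hpa : p ∣ a := ⟨(p - 1) * (2 * p - 1), by rw [ha]; ring⟩
  have hpb : p ∣ b := ⟨3 * (p - 1) * (p - 1), by rw [hb]; ring⟩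
  have hd6 : p ∣ 6 * X := by
    have hba := Nat.dvd_sub hpb hpa
    rwa [Nat.sub_eq_of_eq_add key.symm] at hba
  rcases (Nat.Prime.dvd_mul hp).mp hd6 with h | h
  · exfalso
    have h6 : p ≤ 6 := Nat.le_of_dvd (by norm_num) h
    interval_cases p
    · exact absurd h (by decide)
    · exact absurd hp (by decide)
  · exact h

/-- Entrywise reduction modulo `p` on invertible matrices over `ℤ/pⁿ`. -/
def red (p n r : ℕ) (hn : 1 ≤ n) :
    GL (Fin r) (ZMod (p ^ n)) →* GL (Fin r) (ZMod p) :=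
  Units.map ((ZMod.castHom (dvd_pow_self p (by omega)) (ZMod p)).mapMatrix).toMonoidHom

/-- For a prime `p ≥ 5` and `n ≥ 2`, the reduction map
`Aut((ℤ/pⁿ)²) ≅ GL₂(ℤ/pⁿ) → GL₂(ℤ/p)` admits no group-homomorphism section. -/
theorem stmt2 (p n : ℕ) (hp : p.Prime) (hp5 : 5 ≤ p) (hn : 2 ≤ n) :
    ¬ ∃ s : GL (Fin 2) (ZMod p) →* GL (Fin 2) (ZMod (p ^ n)),
        (red p n 2 (by omega)).comp s = MonoidHom.id (GL (Fin 2) (ZMod p)) := by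
  rintro ⟨s, hs⟩
  haveI : NeZero (p ^ 2) := ⟨by positivity⟩
  -- the order-p unipotent element of GL₂(ℤ/p)
  set Np : Matrix (Fin 2) (Fin 2) (ZMod p) := !![0, 1; 0, 0] with hNp_def
  have hNp : Np * Np = 0 := by
    ext i j
    fin_cases i <;> fin_cases j <;>
      simp [hNp_def, Matrix.mul_apply, Fin.sum_univ_two]
  have hUp1 : (!![1, 1; 0, 1] : Matrix (Fin 2) (Fin 2) (ZMod p)) = 1 + Np := by
    ext i j
    fin_cases i <;> fin_cases j <;> simp [hNp_def]
  have hmul1 : (!![1, 1; 0, 1] : Matrix (Fin 2) (Fin 2) (ZMod p)) * !![1, -1; 0, 1] = 1 := by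
    ext i j
    fin_cases i <;> fin_cases j <;>
      simp [Matrix.mul_apply, Fin.sum_univ_two]
  have hmul2 : (!![1, -1; 0, 1] : Matrix (Fin 2) (Fin 2) (ZMod p)) * !![1, 1; 0, 1] = 1 := by
    ext i j
    fin_cases i <;> fin_cases j <;>
      simp [Matrix.mul_apply, Fin.sum_univ_two]
  set u : GL (Fin 2) (ZMod p) := ⟨!![1, 1; 0, 1], !![1, -1; 0, 1], hmul1, hmul2⟩ with hu_def
  have hu : u ^ p = 1 := by
    apply Units.ext
    show (!![1, 1; 0, 1] : Matrix (Fin 2) (Fin 2) (ZMod p)) ^ p = 1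
    rw [hUp1, aux_one_add_pow Np hNp p]
    have hz : (p • Np : Matrix (Fin 2) (Fin 2) (ZMod p)) = 0 := by
      ext i j
      fin_cases i <;> fin_cases j <;>
        simp [hNp_def, nsmul_eq_mul, ZMod.natCast_self]
    rw [hz, add_zero]
  -- the lift and its properties
  have hsu : s u ^ p = 1 := by rw [← map_pow, hu, map_one]
  have hred : red p n 2 (by omega) (s u) = u := by
    have := DFunLike.congr_fun hs u
    simpa using this
  set M : Matrix (Fin 2) (Fin 2) (ZMod (p ^ n)) := (s u : GL (Fin 2) (ZMod (p ^ n))).val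
    with hM_def
  have hMp : M ^ p = 1 := by
    have := congrArg Units.val hsu
    simpa [hM_def] using this
  set χ : ZMod (p ^ n) →+* ZMod p :=
    ZMod.castHom (dvd_pow_self p (show n ≠ 0 by omega)) (ZMod p) with hχ_def
  have hMred : M.map χ = !![1, 1; 0, 1] := by
    have := congrArg Units.val hred
    simpa [red, hM_def, hχ_def, Units.coe_map, RingHom.mapMatrix_apply] using this
  -- push down to ℤ/p²
  set φ : ZMod (p ^ n) →+* ZMod (p ^ 2) := ZMod.castHom (pow_dvd_pow p hn) (ZMod (p ^ 2))
    with hφ_def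
  set ψ : ZMod (p ^ 2) →+* ZMod p :=
    ZMod.castHom (dvd_pow_self p (two_ne_zero)) (ZMod p) with hψ_def
  set M' : Matrix (Fin 2) (Fin 2) (ZMod (p ^ 2)) := M.map φ with hM'_def
  have hM'p : M' ^ p = 1 := by
    have : M' = φ.mapMatrix M := rfl
    rw [this, ← map_pow, hMp, map_one]
  have hψφ : ∀ x : ZMod (p ^ n), ψ (φ x) = χ x := by
    intro x
    rw [← RingHom.comp_apply, RingHom.ext_zmod (ψ.comp φ) χ]
  have hM'red : M'.map ψ = !![1, 1; 0, 1] := by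
    rw [hM'_def, Matrix.map_map]
    rw [← hMred]
    ext i j
    simp [Matrix.map_apply, hψφ]
  -- set up the square-zero decomposition over ℤ/p²
  set N : Matrix (Fin 2) (Fin 2) (ZMod (p ^ 2)) := !![0, 1; 0, 0] with hN_def
  have hN : N * N = 0 := by
    ext i j
    fin_cases i <;> fin_cases j <;>
      simp [hN_def, Matrix.mul_apply, Fin.sum_univ_two]
  set U : Matrix (Fin 2) (Fin 2) (ZMod (p ^ 2)) := 1 + N with hU_def
  have hUmat : U = !![1, 1; 0, 1] := by
    ext i j
    fin_cases i <;> fin_cases j <;> simp [hU_def, hN_def]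
  set E : Matrix (Fin 2) (Fin 2) (ZMod (p ^ 2)) := M' - U with hE_def
  have hE0 : E.map ψ = 0 := by
    have hU0 : U.map ψ = !![1, 1; 0, 1] := by
      rw [hUmat]
      ext i j
      fin_cases i <;> fin_cases j <;> simp [Matrix.map_apply]
    have : E.map ψ = M'.map ψ - U.map ψ := by
      show ψ.mapMatrix (M' - U) = ψ.mapMatrix M' - ψ.mapMatrix U
      rw [map_sub]
    rw [this, hM'red, hU0, sub_self]
  -- every entry of E is divisible by p
  have hlift : ∀ x : ZMod (p ^ 2), ψ x = 0 → ∃ a : ZMod (p ^ 2), x = (p : ZMod (p ^ 2)) * a := by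
    intro x hx
    have hcast : ((x.val : ℕ) : ZMod p) = 0 := by
      rw [ZMod.castHom_apply] at hx
      rw [ZMod.natCast_val]
      exact hx
    have hdvd : p ∣ x.val := (ZMod.natCast_eq_zero_iff _ _).mp hcast
    obtain ⟨m, hm⟩ := hdvd
    refine ⟨(m : ZMod (p ^ 2)), ?_⟩
    have hx' : ((x.val : ℕ) : ZMod (p ^ 2)) = x := by
      rw [ZMod.natCast_val, ZMod.cast_id]
    rw [← hx', hm]
    push_cast
    ring
  choose A hA using fun i j => hlift (E i j) (by rw [show ψ (E i j) = (E.map ψ) i j from rfl, hE0]; rfl)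
  have hEA : E = (p : ZMod (p ^ 2)) • Matrix.of A := by
    ext i j
    rw [Matrix.smul_apply, smul_eq_mul]
    exact hA i j
  have hcc : (p : ZMod (p ^ 2)) * (p : ZMod (p ^ 2)) = 0 := by
    rw [← Nat.cast_mul, ← pow_two, ZMod.natCast_self]
  have he : ∀ X : Matrix (Fin 2) (Fin 2) (ZMod (p ^ 2)), E * X * E = 0 := by
    intro X
    rw [hEA, smul_mul_assoc, smul_mul_assoc, mul_smul_comm, smul_smul, hcc, zero_smul]
  have hsmulz : ∀ k : ℕ, p ∣ k → ∀ X Y : Matrix (Fin 2) (Fin 2) (ZMod (p ^ 2)),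
      k • (X * E * Y) = 0 := by
    intro k hk X Y
    rw [hEA, mul_smul_comm, smul_mul_assoc, ← Nat.cast_smul_eq_nsmul (ZMod (p ^ 2)), smul_smul]
    have : (k : ZMod (p ^ 2)) * (p : ZMod (p ^ 2)) = 0 := by
      rw [← Nat.cast_mul]
      apply (ZMod.natCast_eq_zero_iff _ _).mpr
      obtain ⟨m, hm⟩ := hk
      exact ⟨m, by rw [hm]; ring⟩
    rw [this, zero_smul]
  -- the sum vanishes
  have hterm : ∀ i ∈ range p, U ^ i * E * U ^ (p - 1 - i)
      = E + (p - 1 - i) • (E * N) + i • (N * E) + (i * (p - 1 - i)) • (N * E * N) := by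
    intro i hi
    rw [hU_def, aux_one_add_pow N hN i, aux_one_add_pow N hN (p - 1 - i)]
    rw [add_mul, one_mul, smul_mul_assoc, mul_add, mul_one, add_mul, mul_smul_comm,
      smul_mul_assoc, mul_smul_comm, smul_smul]
    abel
  have hS : ∑ i ∈ range p, U ^ i * E * U ^ (p - 1 - i) = 0 := by
    rw [Finset.sum_congr rfl hterm]
    rw [Finset.sum_add_distrib, Finset.sum_add_distrib, Finset.sum_add_distrib,
      Finset.sum_const, Finset.card_range, ← Finset.sum_smul, ← Finset.sum_smul,
      ← Finset.sum_smul]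
    have t1 : p • E = 0 := by
      have := hsmulz p dvd_rfl 1 1
      simpa using this
    have t2 : (∑ i ∈ range p, (p - 1 - i)) • (E * N) = 0 := by
      have hd : p ∣ ∑ i ∈ range p, (p - 1 - i) := by
        rw [Finset.sum_range_reflect (fun i => i) p]
        exact aux_dvd_sum_id p hp hp5
      have := hsmulz _ hd 1 N
      simpa using this
    have t3 : (∑ i ∈ range p, i) • (N * E) = 0 := by
      have := hsmulz _ (aux_dvd_sum_id p hp hp5) N 1
      simpa using this
    have t4 : (∑ i ∈ range p, i * (p - 1 - i)) • (N * E * N) = 0 := by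
      exact hsmulz _ (aux_dvd_sum_mul p hp hp5) N N
    rw [t1, t2, t3, t4]
    simp
  -- conclude
  have hM'U : M' = U + E := by rw [hE_def, add_sub_cancel]
  have hpowU : M' ^ p = 1 + p • N := by
    rw [hM'U, aux_pow_expand U E he p, hS, add_zero, hU_def, aux_one_add_pow N hN p]
  have hfinal : (1 : Matrix (Fin 2) (Fin 2) (ZMod (p ^ 2))) = 1 + p • N :=
    hM'p.symm.trans hpowU
  have hpN : (p • N : Matrix (Fin 2) (Fin 2) (ZMod (p ^ 2))) = 0 :=
    add_eq_left.mp hfinal.symm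
  have hentry : (p : ZMod (p ^ 2)) = 0 := by
    have h01 := congrArg (fun X : Matrix (Fin 2) (Fin 2) (ZMod (p ^ 2)) => X 0 1) hpN
    simpa [hN_def, nsmul_eq_mul] using h01
  have hdvd : p ^ 2 ∣ p := (ZMod.natCast_eq_zero_iff p (p ^ 2)).mp hentry
  have hle : p ^ 2 ≤ p := Nat.le_of_dvd (by omega) hdvd
  have : p * p ≤ p := by rwa [pow_two] at hle
  nlinarith
end

section
/- Let p ≥ 5, n ≥ 2, r ≥ 2, and let E be the r×r matrix over ℤ/p^n with a 1 in position (1,r) and 0 elsewhere. Then there is no matrix A ∈ GL_r(ℤ/p^n) such that A ≡ I + E (mod p) and A^p = I. -/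
private lemma aux_pp {p : ℕ} : ((p : ZMod (p ^ 2)) * p = 0) := by
  have h : ((p * p : ℕ) : ZMod (p ^ 2)) = 0 := by
    rw [ZMod.natCast_eq_zero_iff, pow_two]
  push_cast at h
  exact h

private lemma aux_pow {p r : ℕ} (hp : p.Prime) (hp5 : 5 ≤ p)
    (N C : Matrix (Fin r) (Fin r) (ZMod (p ^ 2)))
    (hN2 : N * N = (p : ZMod (p ^ 2)) • C) :
    (1 + N) ^ p = 1 + (p : ZMod (p ^ 2)) • N := by
  have hpp : ((p : ZMod (p ^ 2)) * p = 0) := aux_pp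
  have hz : ∀ X Y : Matrix (Fin r) (Fin r) (ZMod (p ^ 2)),
      ((p : ZMod (p ^ 2)) • X) * ((p : ZMod (p ^ 2)) • Y) = 0 := by
    intro X Y
    rw [smul_mul_assoc, mul_smul_comm, smul_smul, hpp, zero_smul]
  have hmulc : ∀ (c : ℕ) (X : Matrix (Fin r) (Fin r) (ZMod (p ^ 2))),
      X * (c : Matrix (Fin r) (Fin r) (ZMod (p ^ 2))) = ((c : ZMod (p ^ 2))) • X := by
    intro c X
    rw [Nat.cast_smul_eq_nsmul, nsmul_eq_mul]
    exact ((Nat.cast_commute c X).eq).symm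
  obtain ⟨q, rfl⟩ : ∃ q, p = q + 2 := ⟨p - 2, by omega⟩
  have hq : 3 ≤ q := by omega
  rw [Commute.add_pow (Commute.one_left N)]
  rw [Finset.sum_range_succ, Finset.sum_range_succ]
  have hmid : (q + 2) - (q + 1) = 1 := by omega
  have hchoose : (q + 2).choose (q + 1) = q + 2 := Nat.choose_succ_self_right (q + 1)
  rw [hmid, hchoose]
  simp only [one_pow, one_mul, Nat.sub_self, pow_zero, Nat.choose_self, Nat.cast_one, mul_one,
    pow_one]
  have hsum : ∑ m ∈ Finset.range (q + 1),
      N ^ (q + 2 - m) * ((q + 2).choose m : Matrix (Fin r) (Fin r) (ZMod ((q + 2) ^ 2))) = 0 := by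
    apply Finset.sum_eq_zero
    intro m hm
    rw [Finset.mem_range] at hm
    by_cases hm0 : m = 0
    · subst hm0
      simp only [Nat.choose_zero_right, Nat.cast_one, mul_one, Nat.sub_zero]
      have h4 : N ^ (q + 2) = N ^ 2 * (N ^ 2 * N ^ (q - 2)) := by
        rw [← pow_add, ← pow_add]; congr 1; omega
      rw [h4, pow_two N, hN2, ← mul_assoc, hz, zero_mul]
    · obtain ⟨t, ht⟩ := hp.dvd_choose_self hm0 (by omega)
      have h2 : N ^ (q + 2 - m) = N ^ 2 * N ^ (q - m) := by
        rw [← pow_add]; congr 1; omega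
      rw [ht, h2, pow_two N, hN2,
        smul_mul_assoc, hmulc, smul_smul, Nat.cast_mul, mul_right_comm, hpp, zero_mul, zero_smul]
  rw [hsum, hmulc, zero_add]
  abel

/-- Let `p ≥ 5`, `n ≥ 2`, `r ≥ 2`, and let `E` be the `r × r` matrix over `ℤ/pⁿ` with a `1`
in position `(1, r)` and `0` elsewhere.  There is no `A ∈ GL_r(ℤ/pⁿ)` with `A ≡ I + E (mod p)`
and `A ^ p = I`. -/
theorem stmt3 (p n r : ℕ) (hp : p.Prime) (hp5 : 5 ≤ p) (hn : 2 ≤ n) (hr : 2 ≤ r) :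
    ¬ ∃ A : GL (Fin r) (ZMod (p ^ n)),
        ((ZMod.castHom (dvd_pow_self p (by omega)) (ZMod p)).mapMatrix
            (A : Matrix (Fin r) (Fin r) (ZMod (p ^ n))) =
          (ZMod.castHom (dvd_pow_self p (by omega)) (ZMod p)).mapMatrix
            (1 + Matrix.single (⟨0, by omega⟩ : Fin r) (⟨r - 1, by omega⟩ : Fin r)
              (1 : ZMod (p ^ n)))) ∧
        A ^ p = 1 := by
  rintro ⟨A, hred, hpow⟩
  haveI : NeZero (p ^ 2) := ⟨pow_ne_zero 2 hp.ne_zero⟩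
  have hpp : ((p : ZMod (p ^ 2)) * p = 0) := aux_pp
  have hdvd : p ^ 2 ∣ p ^ n := pow_dvd_pow p hn
  set φ : ZMod (p ^ n) →+* ZMod (p ^ 2) := ZMod.castHom hdvd (ZMod (p ^ 2)) with hφ
  set ψ : ZMod (p ^ 2) →+* ZMod p :=
    ZMod.castHom (dvd_pow_self p two_ne_zero) (ZMod p) with hψ
  have hcomp : ∀ y : ZMod (p ^ n),
      ψ (φ y) = ZMod.castHom (dvd_pow_self p (by omega : n ≠ 0)) (ZMod p) y := by
    intro y
    have := ZMod.castHom_comp (dvd_pow_self p two_ne_zero) hdvd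
    exact RingHom.congr_fun this y
  -- lift elements killed by ψ
  have hlift : ∀ x : ZMod (p ^ 2), ψ x = 0 → ∃ b, x = (p : ZMod (p ^ 2)) * b := by
    intro x hx
    have h1 : ((x.val : ℕ) : ZMod p) = 0 := by
      rw [← map_natCast ψ, ZMod.natCast_zmod_val]
      exact hx
    rw [ZMod.natCast_eq_zero_iff] at h1
    obtain ⟨t, ht⟩ := h1
    exact ⟨(t : ZMod (p ^ 2)), by rw [← ZMod.natCast_zmod_val x, ht, Nat.cast_mul]⟩
  set i0 : Fin r := ⟨0, by omega⟩
  set j0 : Fin r := ⟨r - 1, by omega⟩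
  set E2 : Matrix (Fin r) (Fin r) (ZMod (p ^ 2)) := Matrix.single i0 j0 1 with hE2def
  set A2 : Matrix (Fin r) (Fin r) (ZMod (p ^ 2)) :=
    (A : Matrix (Fin r) (Fin r) (ZMod (p ^ n))).map φ with hA2def
  have hmap : ((1 : Matrix (Fin r) (Fin r) (ZMod (p ^ n))) +
      Matrix.single (⟨0, by omega⟩ : Fin r) (⟨r - 1, by omega⟩ : Fin r)
        (1 : ZMod (p ^ n))).map φ = 1 + E2 := by
    ext i j
    simp only [Matrix.map_apply, Matrix.add_apply, Matrix.one_apply, Matrix.single,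
      Matrix.of_apply, map_add, hE2def]
    split_ifs <;> simp
  have hAij : ∀ i j, ∃ b, A2 i j = (1 + E2) i j + (p : ZMod (p ^ 2)) * b := by
    intro i j
    have hE : ∀ i j, ψ (A2 i j) = ψ ((1 + E2) i j) := by
      intro i j
      rw [hA2def, Matrix.map_apply, hcomp, ← hmap, Matrix.map_apply, hcomp]
      have := congrFun (congrFun hred i) j
      simpa [RingHom.mapMatrix_apply, Matrix.map_apply] using this
    obtain ⟨b, hb⟩ := hlift (A2 i j - (1 + E2) i j) (by rw [map_sub, hE i j, sub_self])
    exact ⟨b, by rw [← hb]; ring⟩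
  choose B hB using hAij
  set N : Matrix (Fin r) (Fin r) (ZMod (p ^ 2)) :=
    E2 + (p : ZMod (p ^ 2)) • Matrix.of B with hNdef
  have hA2 : A2 = 1 + N := by
    ext i j
    rw [hB i j]
    simp only [hNdef, Matrix.add_apply, Matrix.smul_apply, Matrix.of_apply, smul_eq_mul]
    ring
  have hE2sq : E2 * E2 = 0 := by
    apply Matrix.single_mul_single_of_ne
    exact Fin.ne_of_val_ne (show r - 1 ≠ 0 by omega)
  have hN2 : N * N = (p : ZMod (p ^ 2)) • (E2 * Matrix.of B + Matrix.of B * E2) := by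
    simp only [hNdef, add_mul, mul_add, smul_mul_assoc, mul_smul_comm, smul_smul, hpp,
      zero_smul, hE2sq, smul_add, add_zero, zero_add]
    abel
  have hApow : A2 ^ p = 1 := by
    have h1 : ((A : Matrix (Fin r) (Fin r) (ZMod (p ^ n)))) ^ p = 1 := by
      have := congrArg (fun u : (Matrix (Fin r) (Fin r) (ZMod (p ^ n)))ˣ =>
        (u : Matrix (Fin r) (Fin r) (ZMod (p ^ n)))) hpow
      simpa using this
    have : A2 ^ p = φ.mapMatrix ((A : Matrix (Fin r) (Fin r) (ZMod (p ^ n))) ^ p) := by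
      rw [map_pow]; rfl
    rw [this, h1, map_one]
  rw [hA2, aux_pow hp hp5 N _ hN2] at hApow
  have h0 : (p : ZMod (p ^ 2)) • N = 0 := by rwa [add_eq_left] at hApow
  have hentry : (p : ZMod (p ^ 2)) * N i0 j0 = 0 := by
    have := congrFun (congrFun h0 i0) j0
    simpa [Matrix.smul_apply, smul_eq_mul] using this
  have hNentry : N i0 j0 = 1 + (p : ZMod (p ^ 2)) * B i0 j0 := by
    rw [hNdef, Matrix.add_apply, hE2def, Matrix.single_apply_same, Matrix.smul_apply,
      Matrix.of_apply, smul_eq_mul]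
  rw [hNentry, mul_add, mul_one, ← mul_assoc, hpp, zero_mul, add_zero] at hentry
  have hdvd' : p ^ 2 ∣ p := by
    have : ((p : ℕ) : ZMod (p ^ 2)) = 0 := hentry
    rwa [ZMod.natCast_eq_zero_iff] at this
  have hle : p ^ 2 ≤ p := Nat.le_of_dvd hp.pos hdvd'
  nlinarith
end

section
/- Let p be prime and G a finite abelian p-group. The kernel of the natural map σ : Aut(G) → Aut(G/pG) is a p-group, i.e., every automorphism of G that induces the identity on G/pG has p-power order. -/
/-- `pG`: the subgroup of `p`-th multiples of an abelian group `G`. -/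
def pMul (p : ℕ) (G : Type*) [AddCommGroup G] : AddSubgroup G :=
  (zsmulAddGroupHom (p : ℤ)).range

section Aux

variable {G : Type*} [AddCommGroup G] (p : ℕ)

/-- `g` is a `p^m`-th multiple. -/
def DD (m : ℕ) (g : G) : Prop := ∃ h : G, p ^ m • h = g

lemma DD_zero (m : ℕ) : DD p m (0 : G) := ⟨0, smul_zero _⟩

lemma DD_add {m : ℕ} {a b : G} (ha : DD p m a) (hb : DD p m b) : DD p m (a + b) := by
  obtain ⟨x, hx⟩ := ha; obtain ⟨y, hy⟩ := hb
  exact ⟨x + y, by rw [smul_add, hx, hy]⟩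

lemma DD_mono {m m' : ℕ} (h : m' ≤ m) {a : G} (ha : DD p m a) : DD p m' a := by
  obtain ⟨x, hx⟩ := ha
  refine ⟨p ^ (m - m') • x, ?_⟩
  rw [smul_smul, ← pow_add, Nat.add_sub_cancel' h, hx]

lemma DD_nsmul {m : ℕ} (c : ℕ) {a : G} (ha : DD p m a) : DD p m (c • a) := by
  obtain ⟨x, hx⟩ := ha
  exact ⟨c • x, by rw [smul_comm, hx]⟩

lemma DD_p_nsmul {m : ℕ} {a : G} (ha : DD p m a) : DD p (m + 1) (p • a) := by
  obtain ⟨x, hx⟩ := ha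
  exact ⟨x, by rw [pow_succ, mul_comm, mul_smul, hx]⟩

lemma DD_map {m : ℕ} (f : AddMonoid.End G) {a : G} (ha : DD p m a) : DD p m (f a) := by
  obtain ⟨x, hx⟩ := ha
  exact ⟨f x, by rw [← map_nsmul, hx]⟩

lemma DD_sum {m : ℕ} {ι : Type*} (s : Finset ι) (f : ι → G)
    (h : ∀ i ∈ s, DD p m (f i)) : DD p m (∑ i ∈ s, f i) :=
  Finset.sum_induction f (DD p m) (fun _ _ => DD_add p) (DD_zero p m) h

end Aux

section Key

variable {G : Type*} [AddCommGroup G] {p : ℕ}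

/-- If `ν` maps `G` into `p^(j+1) G`, then iterating raises divisibility. -/
lemma DD_nu_pow (j : ℕ) (ν : AddMonoid.End G) (hν : ∀ g, DD p (j + 1) (ν g))
    (n : ℕ) {m : ℕ} {a : G} (ha : DD p m a) : DD p (m + n * (j + 1)) ((ν ^ n) a) := by
  induction n with
  | zero => simpa using ha
  | succ n ih =>
    have : (ν ^ (n + 1)) a = ν ((ν ^ n) a) := by
      rw [pow_succ']; rfl
    rw [this]
    obtain ⟨x, hx⟩ := ih
    obtain ⟨y, hy⟩ := hν x
    refine ⟨y, ?_⟩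
    rw [← hx, map_nsmul, ← hy, smul_smul, ← pow_add]
    congr 1
    ring

lemma key (hp : p.Prime) (e : AddMonoid.End G) (h1 : ∀ g, DD p 1 (e g - g)) :
    ∀ j, ∀ g : G, DD p (j + 1) ((e ^ p ^ j) g - g) := by
  intro j
  induction j with
  | zero => simpa using h1
  | succ j ih =>
    intro g
    set τ : AddMonoid.End G := e ^ p ^ j with hτ
    set ν : AddMonoid.End G := τ - 1 with hν
    have hνapp : ∀ g : G, DD p (j + 1) (ν g) := by
      intro g
      have : ν g = τ g - g := rfl
      rw [this]; exact ih g
    have hτν : τ = 1 + ν := by rw [hν]; abel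
    have hpow : e ^ p ^ (j + 1) = τ ^ p := by
      rw [hτ, ← pow_mul, pow_succ]
    have hbin : τ ^ p = ∑ i ∈ Finset.range (p + 1), ν ^ i * (p.choose i : AddMonoid.End G) := by
      rw [hτν]
      have hc : Commute ν (1 : AddMonoid.End G) := Commute.one_right ν
      rw [add_comm]
      rw [hc.add_pow]
      simp [one_pow, mul_one]
    have happ : (τ ^ p) g - g
        = ∑ i ∈ Finset.range p, (ν ^ (i + 1)) ((p.choose (i + 1)) • g) := by
      have : (τ ^ p) g = ∑ i ∈ Finset.range (p + 1),
          (ν ^ i) ((p.choose i) • g) := by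
        rw [hbin]
        erw [AddMonoidHom.finset_sum_apply]
        refine Finset.sum_congr rfl fun i _ => ?_
        show (ν ^ i) ((p.choose i : AddMonoid.End G) g) = _
        rw [AddMonoid.End.natCast_apply]
      rw [this, Finset.sum_range_succ']
      simp
    rw [hpow, happ]
    refine DD_sum p _ _ fun i _ => ?_
    rcases Nat.eq_zero_or_pos i with hi | hi
    · subst hi
      have hch : p.choose 1 = p := Nat.choose_one_right p
      have h1g : DD p 1 ((p.choose 1) • g) := by
        rw [hch]; exact ⟨g, by rw [pow_one]⟩
      have := DD_nu_pow j ν hνapp 1 h1g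
      rw [one_mul] at this
      rwa [Nat.add_comm] at this
    · have h0g : DD p 0 ((p.choose (i + 1)) • g) := ⟨_, by rw [pow_zero, one_smul]⟩
      have := DD_nu_pow j ν hνapp (i + 1) h0g
      refine DD_mono p ?_ this
      have : 2 * (j + 1) ≤ (i + 1) * (j + 1) :=
        Nat.mul_le_mul_right _ (by omega)
      omega

end Key

/-- For a finite abelian `p`-group `G`, every automorphism of `G` inducing the identity on
`G/pG` (i.e. lying in the kernel of `σ : Aut(G) → Aut(G/pG)`) has `p`-power order. -/
theorem stmt6 (p : ℕ) (hp : p.Prime) (G : Type*) [AddCommGroup G] [Fintype G]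
    (hG : ∃ k, Nat.card G = p ^ k)
    (φ : AddAut G) (hφ : ∀ g : G, φ g - g ∈ pMul p G) :
    ∃ k, addOrderOf φ = p ^ k := by
  obtain ⟨k, hk⟩ := hG
  set e : AddMonoid.End G := (φ : G ≃+ G).toAddMonoidHom with he
  have heφ : ∀ g : G, e g = φ g := fun g => rfl
  have h1 : ∀ g : G, DD p 1 (e g - g) := by
    intro g
    obtain ⟨x, hx⟩ := hφ g
    refine ⟨x, ?_⟩
    rw [heφ, ← hx]
    show p ^ 1 • x = (p : ℤ) • x
    rw [pow_one, natCast_zsmul]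
  have hpowapp : ∀ (n : ℕ) (g : G), (n • φ) g = (e ^ n) g := by
    intro n
    induction n with
    | zero => intro g; rfl
    | succ n ih =>
      intro g
      rw [succ_nsmul, pow_succ]
      show (n • φ) (φ g) = (e ^ n) (e g)
      rw [heφ g, ih (φ g)]
  have hcard : ∀ g : G, (p ^ k) • g = 0 := by
    intro g
    rw [← hk]
    exact card_nsmul_eq_zero' 
  have hone : (p ^ k) • φ = 0 := by
    ext g
    have hd := key hp e h1 k g
    obtain ⟨x, hx⟩ := hd
    have : (e ^ p ^ k) g - g = 0 := by
      rw [← hx, pow_succ, mul_comm, mul_smul, hcard x, smul_zero]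
    have h2 : (e ^ p ^ k) g = g := by
      have := sub_eq_zero.mp this; exact this
    show ((p ^ k) • φ) g = g
    rw [hpowapp, h2]
  have hdvd : addOrderOf φ ∣ p ^ k := addOrderOf_dvd_of_nsmul_eq_zero hone
  exact (Nat.dvd_prime_pow hp).mp hdvd |>.imp fun m hm => hm.2
end

section
/- Let G be a finite abelian p-group and G' = pG. If the natural map σ : Aut(G) → Aut(G/pG) admits a section, and pG ⊇ G[p] (equivalently every cyclic direct factor of G has order ≥ p²), then the natural map σ' : Aut(pG) → Aut(pG/p²G) admits a section. -/
section aux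
variable (p : ℕ) {G : Type*} [AddCommGroup G]

lemma mem_pMul_iff {x : G} : x ∈ pMul p G ↔ ∃ g, (p : ℤ) • g = x := Iff.rfl

lemma smul_mem_pMul (g : G) : (p : ℤ) • g ∈ pMul p G := ⟨g, rfl⟩

/-- restriction of an automorphism to `pG` -/
def tauFun (φ : AddAut G) : AddAut (pMul p G) where
  toFun x := ⟨φ x, by
    obtain ⟨g, hg⟩ := x.2
    exact ⟨φ g, by simp only [zsmulAddGroupHom_apply] at hg ⊢; rw [← hg, map_zsmul]⟩⟩
  invFun x := ⟨φ.symm x, by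
    obtain ⟨g, hg⟩ := x.2
    exact ⟨φ.symm g, by simp only [zsmulAddGroupHom_apply] at hg ⊢; rw [← hg, map_zsmul]⟩⟩
  left_inv x := Subtype.ext (φ.left_inv x)
  right_inv x := Subtype.ext (φ.right_inv x)
  map_add' x y := Subtype.ext (map_add φ.toAddMonoidHom x.1 y.1)

def tau : AddAut G →+ AddAut (pMul p G) where
  toFun := tauFun p
  map_zero' := by ext x; rfl
  map_add' φ ψ := by ext x; rfl

/-- the map `G →+ pG`, `g ↦ pg`. -/
def pmulHom : G →+ pMul p G where
  toFun g := ⟨(p : ℤ) • g, smul_mem_pMul p g⟩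
  map_zero' := Subtype.ext (smul_zero _)
  map_add' x y := Subtype.ext (smul_add _ x y)

def fHom : G →+ (pMul p G) ⧸ pMul p (pMul p G) :=
  (QuotientAddGroup.mk' _).comp (pmulHom p)

lemma fHom_ker : ∀ g ∈ pMul p G, fHom (G := G) p g = 0 := by
  rintro _ ⟨g, rfl⟩
  show QuotientAddGroup.mk _ = 0
  rw [QuotientAddGroup.eq_zero_iff]
  exact ⟨⟨(p : ℤ) • g, smul_mem_pMul p g⟩, Subtype.ext rfl⟩

def Fhom : G ⧸ pMul p G →+ (pMul p G) ⧸ pMul p (pMul p G) :=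
  QuotientAddGroup.lift _ (fHom p) (fHom_ker p)

lemma Fhom_bij (hsocle : ∀ g : G, p • g = 0 → g ∈ pMul p G) :
    Function.Bijective (Fhom (G := G) p) := by
  constructor
  · refine (injective_iff_map_eq_zero (Fhom (G := G) p)).mpr fun a ha => ?_
    induction a using QuotientAddGroup.induction_on with
    | H g =>
      have : fHom (G := G) p g = 0 := ha
      rw [fHom] at this
      simp only [AddMonoidHom.comp_apply, QuotientAddGroup.mk'_apply,
        QuotientAddGroup.eq_zero_iff] at this
      obtain ⟨⟨x, hx⟩, hxe⟩ := this
      have hx' : (p : ℤ) • x = (p : ℤ) • g := congrArg Subtype.val hxe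
      have hker : p • (g - x) = 0 := by
        have : (p : ℤ) • (g - x) = 0 := by rw [smul_sub, hx', sub_self]
        simpa [natCast_zsmul] using this
      have hg : g - x ∈ pMul p G := hsocle _ hker
      have : g ∈ pMul p G := by
        have := (pMul p G).add_mem hg hx
        simpa using this
      rwa [QuotientAddGroup.eq_zero_iff]
  · intro y
    induction y using QuotientAddGroup.induction_on with
    | H x =>
      obtain ⟨x, hx⟩ := x
      obtain ⟨g, rfl⟩ := hx
      exact ⟨QuotientAddGroup.mk g, rfl⟩

end aux

/-- Let `G` be a finite abelian `p`-group with `G[p] ⊆ pG`.  If the reduction map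
`σ : Aut(G) → Aut(G/pG)` admits a section, then so does the reduction map
`σ' : Aut(pG) → Aut(pG/p(pG))` (note `p(pG) = p²G`). -/
theorem stmt10 (p : ℕ) (hp : p.Prime) (G : Type*) [AddCommGroup G] [Fintype G]
    (hG : ∃ k, Nat.card G = p ^ k)
    (hsocle : ∀ g : G, p • g = 0 → g ∈ pMul p G)
    (σ : AddAut G →+ AddAut (G ⧸ pMul p G))
    (hσ : ∀ (φ : AddAut G) (g : G), σ φ (QuotientAddGroup.mk g) = QuotientAddGroup.mk (φ g))
    (hs : ∃ s : AddAut (G ⧸ pMul p G) →+ AddAut G, σ.comp s = AddMonoidHom.id _)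
    (σ' : AddAut (pMul p G) →+ AddAut ((pMul p G) ⧸ pMul p (pMul p G)))
    (hσ' : ∀ (φ : AddAut (pMul p G)) (g : pMul p G),
      σ' φ (QuotientAddGroup.mk g) = QuotientAddGroup.mk (φ g)) :
    ∃ s' : AddAut ((pMul p G) ⧸ pMul p (pMul p G)) →+ AddAut (pMul p G),
      σ'.comp s' = AddMonoidHom.id _ := by
  obtain ⟨s, hsec⟩ := hs
  set e : (G ⧸ pMul p G) ≃+ (pMul p G) ⧸ pMul p (pMul p G) :=
    AddEquiv.ofBijective (Fhom p) (Fhom_bij p hsocle) with he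
  have he_mk : ∀ g : G, e (QuotientAddGroup.mk g) = QuotientAddGroup.mk (pmulHom p g) :=
    fun g => rfl
  set c : AddAut (G ⧸ pMul p G) ≃+ AddAut ((pMul p G) ⧸ pMul p (pMul p G)) := AddAut.congr e
  have key : ∀ φ : AddAut G, σ' (tau p φ) = c (σ φ) := by
    intro φ
    ext x
    induction x using QuotientAddGroup.induction_on with
    | H y =>
      obtain ⟨y, hy⟩ := y
      obtain ⟨g, rfl⟩ := hy
      have h1 : σ' (tau p φ) (QuotientAddGroup.mk (pmulHom p g))
          = QuotientAddGroup.mk (tauFun p φ (pmulHom p g)) := hσ' _ _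
      have h2 : (QuotientAddGroup.mk (pmulHom p g) :
            (pMul p G) ⧸ pMul p (pMul p G)) = e (QuotientAddGroup.mk g) := rfl
      have h3 : c (σ φ) (e (QuotientAddGroup.mk g)) = e (σ φ (QuotientAddGroup.mk g)) := by
        show e ((σ φ) (e.symm (e _))) = _
        rw [e.symm_apply_apply]
      have h4 : tauFun p φ (pmulHom p g) = pmulHom p (φ g) :=
        Subtype.ext (map_zsmul φ.toAddMonoidHom (p : ℤ) g)
      show σ' (tau p φ) (QuotientAddGroup.mk (pmulHom p g))
          = c (σ φ) (QuotientAddGroup.mk (pmulHom p g))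
      rw [h1, h4, h2, h3, hσ φ g, he_mk]
  refine ⟨(tau p).comp (s.comp c.symm.toAddMonoidHom), AddMonoidHom.ext fun ψ => ?_⟩
  have hσs : σ (s (c.symm ψ)) = c.symm ψ := DFunLike.congr_fun hsec (c.symm ψ)
  show σ' (tau p (s (c.symm ψ))) = ψ
  rw [key, hσs, c.apply_symm_apply]
end

section
/- For p = 3 and n ≥ 2, the reduction map GL_2(ℤ/3^n) → GL_2(ℤ/3) admits a group-homomorphism section. -/
open Matrix Zsqrtd


abbrev K := ZMod 3 × ZMod 3 × ZMod 3 × ZMod 3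
abbrev V := (ℤ√(-2)) × (ℤ√(-2)) × (ℤ√(-2)) × (ℤ√(-2))

def mulK : K → K → K
  | (a,b,c,d), (e,f,g,h) => (a*e+b*g, a*f+b*h, c*e+d*g, c*f+d*h)

def mulV : V → V → V
  | (a,b,c,d), (e,f,g,h) => (a*e+b*g, a*f+b*h, c*e+d*g, c*f+d*h)

def detK : K → ZMod 3
  | (a,b,c,d) => a*d - b*c

def redc (z : ℤ√(-2)) : ZMod 3 := (z.re : ZMod 3) + (z.im : ZMod 3)

def redV : V → K
  | (a,b,c,d) => (redc a, redc b, redc c, redc d)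

set_option maxHeartbeats 2000000 in
def tblE : List (K × V) := [
  ((0, 1, 1, 0), (⟨1, -1⟩, ⟨-1, -1⟩, ⟨-2, 0⟩, ⟨-1, 1⟩)),
  ((0, 1, 1, 1), (⟨-1, 1⟩, ⟨0, 1⟩, ⟨1, 0⟩, ⟨1, 0⟩)),
  ((0, 1, 1, 2), (⟨0, 0⟩, ⟨1, 0⟩, ⟨1, 0⟩, ⟨0, -1⟩)),
  ((0, 1, 2, 0), (⟨-1, 1⟩, ⟨0, 1⟩, ⟨2, 0⟩, ⟨1, -1⟩)),
  ((0, 1, 2, 1), (⟨1, -1⟩, ⟨-1, -1⟩, ⟨-1, 0⟩, ⟨0, 1⟩)),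
  ((0, 1, 2, 2), (⟨0, 0⟩, ⟨1, 0⟩, ⟨-1, 0⟩, ⟨-1, 0⟩)),
  ((0, 2, 1, 0), (⟨1, -1⟩, ⟨0, -1⟩, ⟨-2, 0⟩, ⟨-1, 1⟩)),
  ((0, 2, 1, 1), (⟨0, 0⟩, ⟨-1, 0⟩, ⟨1, 0⟩, ⟨1, 0⟩)),
  ((0, 2, 1, 2), (⟨-1, 1⟩, ⟨1, 1⟩, ⟨1, 0⟩, ⟨0, -1⟩)),
  ((0, 2, 2, 0), (⟨-1, 1⟩, ⟨1, 1⟩, ⟨2, 0⟩, ⟨1, -1⟩)),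
  ((0, 2, 2, 1), (⟨0, 0⟩, ⟨-1, 0⟩, ⟨-1, 0⟩, ⟨0, 1⟩)),
  ((0, 2, 2, 2), (⟨1, -1⟩, ⟨0, -1⟩, ⟨-1, 0⟩, ⟨-1, 0⟩)),
  ((1, 0, 0, 1), (⟨1, 0⟩, ⟨0, 0⟩, ⟨0, 0⟩, ⟨1, 0⟩)),
  ((1, 0, 0, 2), (⟨1, 0⟩, ⟨1, -1⟩, ⟨0, 0⟩, ⟨-1, 0⟩)),
  ((1, 0, 1, 1), (⟨1, 0⟩, ⟨1, -1⟩, ⟨-1, -1⟩, ⟨-2, 0⟩)),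
  ((1, 0, 1, 2), (⟨1, 0⟩, ⟨0, 0⟩, ⟨-1, -1⟩, ⟨-1, 0⟩)),
  ((1, 0, 2, 1), (⟨-2, 0⟩, ⟨-1, 1⟩, ⟨1, 1⟩, ⟨1, 0⟩)),
  ((1, 0, 2, 2), (⟨-2, 0⟩, ⟨-1, 1⟩, ⟨1, 1⟩, ⟨2, 0⟩)),
  ((1, 1, 0, 1), (⟨0, 1⟩, ⟨1, 0⟩, ⟨1, -1⟩, ⟨-1, -1⟩)),
  ((1, 1, 0, 2), (⟨-1, -1⟩, ⟨-2, 0⟩, ⟨-1, 1⟩, ⟨1, 1⟩)),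
  ((1, 1, 1, 0), (⟨0, 1⟩, ⟨1, 0⟩, ⟨1, 0⟩, ⟨0, 0⟩)),
  ((1, 1, 1, 2), (⟨-1, -1⟩, ⟨-2, 0⟩, ⟨0, 1⟩, ⟨1, 1⟩)),
  ((1, 1, 2, 0), (⟨1, 0⟩, ⟨1, 0⟩, ⟨-1, 0⟩, ⟨0, 0⟩)),
  ((1, 1, 2, 1), (⟨1, 0⟩, ⟨1, 0⟩, ⟨0, -1⟩, ⟨-1, -1⟩)),
  ((1, 2, 0, 1), (⟨-1, -1⟩, ⟨-1, 0⟩, ⟨-1, 1⟩, ⟨0, 1⟩)),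
  ((1, 2, 0, 2), (⟨0, 1⟩, ⟨1, 1⟩, ⟨1, -1⟩, ⟨0, -1⟩)),
  ((1, 2, 1, 0), (⟨0, 1⟩, ⟨1, 1⟩, ⟨1, 0⟩, ⟨1, -1⟩)),
  ((1, 2, 1, 1), (⟨-1, -1⟩, ⟨-1, 0⟩, ⟨0, 1⟩, ⟨1, 0⟩)),
  ((1, 2, 2, 0), (⟨1, 0⟩, ⟨0, -1⟩, ⟨-1, 0⟩, ⟨-1, 1⟩)),
  ((1, 2, 2, 2), (⟨1, 0⟩, ⟨0, -1⟩, ⟨0, -1⟩, ⟨-1, 0⟩)),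
  ((2, 0, 0, 1), (⟨-1, 0⟩, ⟨-1, 1⟩, ⟨0, 0⟩, ⟨1, 0⟩)),
  ((2, 0, 0, 2), (⟨-1, 0⟩, ⟨0, 0⟩, ⟨0, 0⟩, ⟨-1, 0⟩)),
  ((2, 0, 1, 1), (⟨2, 0⟩, ⟨1, -1⟩, ⟨-1, -1⟩, ⟨-2, 0⟩)),
  ((2, 0, 1, 2), (⟨2, 0⟩, ⟨1, -1⟩, ⟨-1, -1⟩, ⟨-1, 0⟩)),
  ((2, 0, 2, 1), (⟨-1, 0⟩, ⟨0, 0⟩, ⟨1, 1⟩, ⟨1, 0⟩)),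
  ((2, 0, 2, 2), (⟨-1, 0⟩, ⟨-1, 1⟩, ⟨1, 1⟩, ⟨2, 0⟩)),
  ((2, 1, 0, 1), (⟨0, -1⟩, ⟨-1, -1⟩, ⟨-1, 1⟩, ⟨0, 1⟩)),
  ((2, 1, 0, 2), (⟨1, 1⟩, ⟨1, 0⟩, ⟨1, -1⟩, ⟨0, -1⟩)),
  ((2, 1, 1, 0), (⟨-1, 0⟩, ⟨0, 1⟩, ⟨1, 0⟩, ⟨1, -1⟩)),
  ((2, 1, 1, 1), (⟨-1, 0⟩, ⟨0, 1⟩, ⟨0, 1⟩, ⟨1, 0⟩)),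
  ((2, 1, 2, 0), (⟨0, -1⟩, ⟨-1, -1⟩, ⟨-1, 0⟩, ⟨-1, 1⟩)),
  ((2, 1, 2, 2), (⟨1, 1⟩, ⟨1, 0⟩, ⟨0, -1⟩, ⟨-1, 0⟩)),
  ((2, 2, 0, 1), (⟨1, 1⟩, ⟨2, 0⟩, ⟨1, -1⟩, ⟨-1, -1⟩)),
  ((2, 2, 0, 2), (⟨0, -1⟩, ⟨-1, 0⟩, ⟨-1, 1⟩, ⟨1, 1⟩)),
  ((2, 2, 1, 0), (⟨-1, 0⟩, ⟨-1, 0⟩, ⟨1, 0⟩, ⟨0, 0⟩)),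
  ((2, 2, 1, 2), (⟨-1, 0⟩, ⟨-1, 0⟩, ⟨0, 1⟩, ⟨1, 1⟩)),
  ((2, 2, 2, 0), (⟨0, -1⟩, ⟨-1, 0⟩, ⟨-1, 0⟩, ⟨0, 0⟩)),
  ((2, 2, 2, 1), (⟨1, 1⟩, ⟨2, 0⟩, ⟨0, -1⟩, ⟨-1, -1⟩))]

def fE (k : K) : V := ((tblE.find? fun p => decide (p.1 = k)).map Prod.snd).getD (1, 0, 0, 1)

set_option maxRecDepth 100000 in
set_option maxHeartbeats 1000000 in
lemma D1 : ∀ k : K, detK k ≠ 0 → (tblE.find? fun p => decide (p.1 = k)).isSome := by decide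

set_option maxRecDepth 100000 in
set_option maxHeartbeats 4000000 in
lemma D2 : ∀ p ∈ tblE, ∀ q ∈ tblE, fE (mulK p.1 q.1) = mulV p.2 q.2 := by decide

lemma D3 : fE (1, 0, 0, 1) = (1, 0, 0, 1) := by decide

set_option maxRecDepth 100000 in
lemma D4 : ∀ p ∈ tblE, redV p.2 = p.1 := by decide

lemma fE_spec (k : K) (hk : (tblE.find? fun p => decide (p.1 = k)).isSome) :
    ∃ p ∈ tblE, p.1 = k ∧ fE k = p.2 := by
  obtain ⟨q, hq⟩ := Option.isSome_iff_exists.1 hk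
  have h1 := List.find?_some hq
  exact ⟨q, List.mem_of_find?_eq_some hq, of_decide_eq_true h1, by simp [fE, hq]⟩

lemma fE_mul (k l : K) (hk : detK k ≠ 0) (hl : detK l ≠ 0) :
    fE (mulK k l) = mulV (fE k) (fE l) := by
  obtain ⟨p, hp, hpk, hfp⟩ := fE_spec k (D1 k hk)
  obtain ⟨q, hq, hql, hfq⟩ := fE_spec l (D1 l hl)
  rw [hfp, hfq, ← hpk, ← hql]
  exact D2 p hp q hq

def enc (m : Matrix (Fin 2) (Fin 2) (ZMod 3)) : K := (m 0 0, m 0 1, m 1 0, m 1 1)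

def toM : K → Matrix (Fin 2) (Fin 2) (ZMod 3)
  | (a,b,c,d) => !![a, b; c, d]

lemma toM_enc (m : Matrix (Fin 2) (Fin 2) (ZMod 3)) : toM (enc m) = m :=
  (Matrix.eta_fin_two m).symm

lemma enc_mul (m m' : Matrix (Fin 2) (Fin 2) (ZMod 3)) :
    enc (m * m') = mulK (enc m) (enc m') := by
  simp [enc, mulK, Matrix.mul_apply, Fin.sum_univ_two]

lemma detK_enc (m : Matrix (Fin 2) (Fin 2) (ZMod 3)) : detK (enc m) = m.det := by
  simp [detK, enc, Matrix.det_fin_two]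

lemma enc_one : enc 1 = (1, 0, 0, 1) := by
  simp [enc, Matrix.one_apply]

section
variable {R : Type} [CommRing R]

/-- The ring hom `ℤ√-2 → R` sending `√-2` to `t`. -/
def phi (t : R) (ht : t * t = -2) : ℤ√(-2) →+* R where
  toFun z := (z.re : R) + t * (z.im : R)
  map_zero' := by simp
  map_one' := by simp
  map_add' x y := by
    simp only [Zsqrtd.re_add, Zsqrtd.im_add]
    push_cast
    ring
  map_mul' x y := by
    simp only [Zsqrtd.re_mul, Zsqrtd.im_mul]
    push_cast
    linear_combination (-(x.im : R) * (y.im : R)) * ht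

lemma phi_apply (t : R) (ht : t * t = -2) (z : ℤ√(-2)) :
    phi t ht z = (z.re : R) + t * (z.im : R) := rfl

def toV (φ : ℤ√(-2) →+* R) : V → Matrix (Fin 2) (Fin 2) R
  | (a,b,c,d) => !![φ a, φ b; φ c, φ d]

lemma toV_mul (φ : ℤ√(-2) →+* R) (v w : V) :
    toV φ (mulV v w) = toV φ v * toV φ w := by
  obtain ⟨a, b, c, d⟩ := v
  obtain ⟨e, f, g, h⟩ := w
  simp [toV, mulV, Matrix.mul_fin_two, _root_.map_add, _root_.map_mul]

lemma toV_one (φ : ℤ√(-2) →+* R) : toV φ (1, 0, 0, 1) = 1 := by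
  simp [toV, Matrix.one_fin_two]

lemma toV_map (φ : ℤ√(-2) →+* R) (ψ : R →+* ZMod 3) (hc : ∀ z, ψ (φ z) = redc z) (v : V) :
    (toV φ v).map ψ = toM (redV v) := by
  obtain ⟨a, b, c, d⟩ := v
  ext i j
  fin_cases i <;> fin_cases j <;> simp [toV, toM, redV, hc]

/-- The lifted map on matrices. -/
def Fmap (t : R) (ht : t * t = -2) (m : Matrix (Fin 2) (Fin 2) (ZMod 3)) :
    Matrix (Fin 2) (Fin 2) R :=
  toV (phi t ht) (fE (enc m))

lemma Fmap_mul (t : R) (ht : t * t = -2) (m₁ m₂ : Matrix (Fin 2) (Fin 2) (ZMod 3))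
    (h₁ : m₁.det ≠ 0) (h₂ : m₂.det ≠ 0) :
    Fmap t ht (m₁ * m₂) = Fmap t ht m₁ * Fmap t ht m₂ := by
  unfold Fmap
  rw [enc_mul, fE_mul _ _ (by rwa [detK_enc]) (by rwa [detK_enc]), toV_mul]

lemma Fmap_one (t : R) (ht : t * t = -2) : Fmap t ht 1 = 1 := by
  unfold Fmap
  rw [enc_one, D3, toV_one]

lemma Fmap_red (t : R) (ht : t * t = -2) (ψ : R →+* ZMod 3) (hψ : ψ t = 1)
    (m : Matrix (Fin 2) (Fin 2) (ZMod 3)) (hm : m.det ≠ 0) :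
    (Fmap t ht m).map ψ = m := by
  have hc : ∀ z, ψ (phi t ht z) = redc z := by
    intro z
    rw [phi_apply, _root_.map_add, _root_.map_mul, hψ, map_intCast, map_intCast, one_mul, redc]
  obtain ⟨p, hp, hpk, hfp⟩ := fE_spec (enc m) (D1 _ (by rwa [detK_enc]))
  rw [Fmap, hfp, toV_map _ _ hc, D4 p hp, hpk, toM_enc]

end

lemma gl_det_ne (u : GL (Fin 2) (ZMod 3)) : (↑u : Matrix (Fin 2) (Fin 2) (ZMod 3)).det ≠ 0 := by
  intro h0
  have h := congrArg Matrix.det u.mul_inv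
  rw [Matrix.det_mul, h0, zero_mul, Matrix.det_one] at h
  exact zero_ne_one h

lemma exists_int_sqrt : ∀ n : ℕ, 1 ≤ n → ∃ a : ℤ, (3:ℤ)^n ∣ a*a+2 ∧ (3:ℤ) ∣ a-1 := by
  intro n hn
  induction n, hn using Nat.le_induction with
  | base => exact ⟨1, by norm_num, by norm_num⟩
  | succ m hm ih =>
    obtain ⟨a, ⟨k, hk⟩, ⟨b, hb⟩⟩ := ih
    have ha : a = 3*b + 1 := by linarith
    subst ha
    refine ⟨3*b + 1 + 3^m * k, ⟨k*(1+2*b) + 3^(m-1)*k^2, ?_⟩, ⟨b + 3^(m-1)*k, ?_⟩⟩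
    · have e : (3:ℤ)^(m+1) * 3^(m-1) = 3^m * 3^m := by
        rw [← pow_add, ← pow_add]; congr 1; omega
      have e2 : (3:ℤ)^(m+1) = 3 * 3^m := by rw [pow_succ]; ring
      linear_combination hk - k^2 * e + (k*(1+2*b)) * e2
    · have e3 : (3:ℤ)^m = 3 * 3^(m-1) := by
        rw [← pow_succ']; congr 1; omega
      linear_combination k * e3

lemma exists_t (n : ℕ) (hn : 1 ≤ n) :
    ∃ t : ZMod (3^n), t * t = -2 ∧ ∀ (hd : (3:ℕ) ∣ 3^n), ZMod.castHom hd (ZMod 3) t = 1 := by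
  obtain ⟨a, h1, h2⟩ := exists_int_sqrt n hn
  refine ⟨((a : ℤ) : ZMod (3^n)), ?_, ?_⟩
  · have : ((a*a+2 : ℤ) : ZMod (3^n)) = 0 := by
      rw [ZMod.intCast_zmod_eq_zero_iff_dvd]
      push_cast
      exact h1
    push_cast at this
    linear_combination this
  · intro hd
    have : ((a - 1 : ℤ) : ZMod 3) = 0 := by
      rw [ZMod.intCast_zmod_eq_zero_iff_dvd]
      exact_mod_cast h2
    push_cast at this
    have h3 : ((a : ℤ) : ZMod 3) = 1 := by linear_combination this
    rw [map_intCast, h3]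

/-- For `p = 3` and `n ≥ 2`, the reduction map `GL₂(ℤ/3ⁿ) → GL₂(ℤ/3)` admits a
group-homomorphism section. -/
theorem stmt12 (n : ℕ) (hn : 2 ≤ n) :
    ∃ s : GL (Fin 2) (ZMod 3) →* GL (Fin 2) (ZMod (3 ^ n)),
      (red 3 n 2 (by omega)).comp s = MonoidHom.id (GL (Fin 2) (ZMod 3)) := by
  obtain ⟨t, ht, ht1⟩ := exists_t n (by omega)
  have hdet : ∀ u : GL (Fin 2) (ZMod 3), (↑u⁻¹ : Matrix (Fin 2) (Fin 2) (ZMod 3)).det ≠ 0 :=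
    fun u => gl_det_ne u⁻¹
  refine ⟨{
    toFun := fun u => ⟨Fmap t ht ↑u, Fmap t ht ↑u⁻¹, ?_, ?_⟩
    map_one' := ?_
    map_mul' := ?_ }, ?_⟩
  · rw [← Fmap_mul t ht _ _ (gl_det_ne u) (hdet u), Units.mul_inv, Fmap_one]
  · rw [← Fmap_mul t ht _ _ (hdet u) (gl_det_ne u), Units.inv_mul, Fmap_one]
  · exact Units.ext (by simpa using Fmap_one t ht)
  · intro u v
    exact Units.ext (by simpa using Fmap_mul t ht _ _ (gl_det_ne u) (gl_det_ne v))
  · refine MonoidHom.ext fun u => ?_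
    refine Units.ext ?_
    show (ZMod.castHom _ (ZMod 3)).mapMatrix (Fmap t ht ↑u) = ↑u
    rw [RingHom.mapMatrix_apply]
    exact Fmap_red t ht _ (ht1 _) _ (gl_det_ne u)
end
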